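/- Let m be a positive integer with gcd(m,q) = 1, a an integer with gcd(a,m) = 1, and C = F_q[x]·c(x) the 1-generator QC code of index l generated by c(x) = (c_1(x),...,c_l(x)) ∈ (F_q[x]/(x^m−1))^l. Let a' be the residue of −a modulo m. Then C is μ_a-LCD if and only if gcd(Σ_{j=1}^l c_j(x)·c_j(x^{a'}), x^m−1) = gcd(c_1(x),...,c_l(x), x^m−1) (monic polynomial gcds in F_q[x], computing c_j(x^{a'}) modulo x^m−1), and C is μ_a self-orthogonal if and only if Σ_{j=1}^l c_j(x)·c_j(x^{a'}) ≡ 0 (mod x^m−1). -/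

import Mathlib

/-!
Read `F[x]/(x^m - 1)` through coefficient vectors indexed by `ZMod m`. For `u, v` in this ring,
the Euclidean inner product of the vectors of `u` and `μ_a v` is the constant coefficient of
`u(x) v(x^{a'})` modulo `x^m - 1`, because `x^i · x^{a' a⁻¹ i} = x^{(1 - a a⁻¹) i} = 1` there; and
the bilinear form `(u, w) ↦ [x^0] (u w mod x^m - 1)` is nondegenerate. Since `v ↦ v(x^{a'})` is
bijective on `F[x]/(x^m - 1)`, the codeword `p · c` lies in `(μ_a C)^⊥` iff `x^m - 1 ∣ p T`,
where `T = ∑ c_j(x) c_j(x^{a'})`. Self-orthogonality is the case `p = 1`. The code is `μ_a`-LCD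
iff `x^m - 1 ∣ p T` forces `x^m - 1 ∣ p · gcd(c_j)`; testing this with
`p = (x^m - 1) / gcd(T, x^m - 1)` shows it is equivalent to `gcd(T, x^m - 1) = gcd(c, x^m - 1)`.
-/

open scoped BigOperators
open Polynomial

/-- The Euclidean dual of a linear code inside `(F[x]/(x^m - 1))^l`, each factor being
identified with `F^m` (coordinates indexed by `ZMod m`) via coefficient vectors. -/
def qcDual {F : Type*} [Field F] {l m : ℕ} [NeZero m]
    (C : Submodule F (Fin l → ZMod m → F)) : Submodule F (Fin l → ZMod m → F) where
  carrier := {b | ∀ c ∈ C, ∑ j, ∑ i, b j i * c j i = 0}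
  zero_mem' := by intro c hc; simp
  add_mem' := by
    intro x y hx hy c hc
    simp only [Set.mem_setOf_eq, Pi.add_apply, add_mul, Finset.sum_add_distrib,
      hx c hc, hy c hc, add_zero]
  smul_mem' := by
    intro r x hx c hc
    simp only [Set.mem_setOf_eq, Pi.smul_apply, smul_eq_mul, mul_assoc,
      ← Finset.mul_sum, hx c hc, mul_zero]

/-- The coordinate permutation `μ_a` of `(F[x]/(x^m - 1))^l`, sending each component
`c_j(x)` to `c_j(x^a) mod (x^m - 1)`; on coefficient vectors the coefficient of `x^i`
of the image of `c_j` is the coefficient of `x^(a⁻¹ i)` of `c_j`. -/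
def muQC {F : Type*} [Field F] (l m : ℕ) (a : ℤ) :
    (Fin l → ZMod m → F) →ₗ[F] (Fin l → ZMod m → F) where
  toFun c := fun j i => c j (((a : ZMod m))⁻¹ * i)
  map_add' := fun _ _ => rfl
  map_smul' := fun _ _ => rfl

/-- The coefficient vector (indexed by `ZMod m`) of a polynomial of degree `< m`,
identifying `F[x]/(x^m - 1)` with `F^m`. -/
def polyToVec {F : Type*} [Field F] (m : ℕ) [NeZero m] (p : Polynomial F) : ZMod m → F :=
  fun i => p.coeff i.val

/-- The 1-generator quasi-cyclic code of index `l` generated by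
`c = (c_1(x), …, c_l(x)) ∈ (F[x]/(x^m - 1))^l`, namely
`F_q[x]·c = {(p c_1 mod (x^m-1), …, p c_l mod (x^m-1)) : p ∈ F_q[x]}`. -/
def oneGenQC {F : Type*} [Field F] (m l : ℕ) [NeZero m] (c : Fin l → Polynomial F) :
    Submodule F (Fin l → ZMod m → F) :=
  Submodule.span F
    {v | ∃ p : Polynomial F, v = fun j => polyToVec m ((p * c j) % (X ^ m - 1))}


section GCD

variable {α : Type*} [CommMonoidWithZero α] [NormalizedGCDMonoid α]

theorem dvd_mul_finset_gcd_iff {ι : Type*} {s : Finset ι} {f : ι → α} {n p : α} :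
    n ∣ p * s.gcd f ↔ ∀ i ∈ s, n ∣ p * f i := by
  rw [← (Finset.gcd_mul_left' s f p).dvd_iff_dvd_right, Finset.dvd_gcd_iff]

theorem forall_dvd_mul_imp_dvd_mul_iff_gcd_eq {n t g : α} (hn : n ≠ 0) (hg : g ∣ t) :
    (∀ p, n ∣ p * t → n ∣ p * g) ↔ gcd t n = gcd g n := by
  constructor
  · intro h
    obtain ⟨p₀, hp₀⟩ := gcd_dvd_right t n
    have hp₀_ne : p₀ ≠ 0 := by rintro rfl; exact hn (by simpa using hp₀)
    have hdiv : n ∣ p₀ * t := by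
      obtain ⟨t', ht'⟩ := gcd_dvd_left t n
      refine ⟨t', ?_⟩
      calc p₀ * t = gcd t n * p₀ * t' := by rw [mul_comm _ p₀, mul_assoc, ← ht']
        _ = n * t' := by rw [← hp₀]
    have hdg : gcd t n ∣ g := by
      rw [← mul_dvd_mul_iff_right hp₀_ne, ← hp₀, mul_comm g]
      exact h p₀ hdiv
    exact dvd_antisymm_of_normalize_eq (normalize_gcd _ _) (normalize_gcd _ _)
      (dvd_gcd hdg (gcd_dvd_right t n)) (gcd_dvd_gcd hg dvd_rfl)
  · intro heq p hpt
    have hdvd : n ∣ p * gcd t n :=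
      (gcd_mul_left' p t n).dvd_iff_dvd_right.mp (dvd_gcd hpt (dvd_mul_left n p))
    rw [heq] at hdvd
    exact hdvd.trans (mul_dvd_mul_left p (gcd_dvd_left g n))

end GCD

theorem EuclideanDomain.dvd_sub_mod {R : Type*} [EuclideanDomain R] (a b : R) : b ∣ a - a % b :=
  Dvd.intro _ (eq_sub_of_add_eq (EuclideanDomain.div_add_mod a b))

section XPowSubOne

variable {R : Type*} [Ring R] [Nontrivial R] {m : ℕ} [NeZero m]

theorem X_pow_sub_one_ne_zero : (X ^ m - 1 : R[X]) ≠ 0 := by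
  simpa using X_pow_sub_C_ne_zero (NeZero.pos m) (1 : R)

theorem degree_X_pow_sub_one : (X ^ m - 1 : R[X]).degree = m := by
  simpa using degree_X_pow_sub_C (NeZero.pos m) (1 : R)

end XPowSubOne

section QuasiCyclic

variable {F : Type*} [Field F] {m l : ℕ}

variable (m) in
noncomputable def twistedSelfInner (e : ℕ) (c : Fin l → F[X]) : F[X] :=
  ∑ j, c j * ((c j).comp (X ^ e) % (X ^ m - 1))

theorem finset_gcd_dvd_twistedSelfInner [DecidableEq F] (e : ℕ) (c : Fin l → F[X]) :
    Finset.univ.gcd c ∣ twistedSelfInner m e c :=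
  Finset.dvd_sum fun j _ => (Finset.gcd_dvd (Finset.mem_univ j)).mul_right _

variable [NeZero m]

variable (F m) in
noncomputable def cyclicCoeffs : F[X] →ₗ[F] ZMod m → F where
  toFun p := polyToVec m (p % (X ^ m - 1))
  map_add' p q := by
    funext i
    simp only [polyToVec, add_mod, coeff_add, Pi.add_apply]
  map_smul' r p := by
    funext i
    simp only [polyToVec, mod_def, smul_modByMonic, coeff_smul, Pi.smul_apply,
      RingHom.id_apply]

theorem cyclicCoeffs_eq_zero_iff {p : F[X]} : cyclicCoeffs F m p = 0 ↔ (X ^ m - 1) ∣ p := by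
  rw [← EuclideanDomain.mod_eq_zero]
  constructor
  · intro h
    ext k
    rw [coeff_zero]
    by_cases hk : k < m
    · simpa [cyclicCoeffs, polyToVec, ZMod.val_natCast, Nat.mod_eq_of_lt hk] using
        congrFun h (k : ZMod m)
    · refine coeff_eq_zero_of_degree_lt ((degree_mod_lt p X_pow_sub_one_ne_zero).trans_le ?_)
      rw [degree_X_pow_sub_one]
      exact_mod_cast not_lt.mp hk
  · intro h
    funext i
    simp [cyclicCoeffs, polyToVec, h]

theorem cyclicCoeffs_eq_iff {p q : F[X]} :
    cyclicCoeffs F m p = cyclicCoeffs F m q ↔ (X ^ m - 1) ∣ p - q := by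
  rw [← sub_eq_zero, ← map_sub, cyclicCoeffs_eq_zero_iff]

theorem cyclicCoeffs_monomial (t : ℕ) (α : F) :
    cyclicCoeffs F m (monomial t α) = Pi.single (t : ZMod m) α := by
  have hred : (X ^ m - 1 : F[X]) ∣ monomial t α - monomial (t % m) α := by
    have hpow : (X ^ m - 1 : F[X]) ∣ (X ^ m) ^ (t / m) - 1 := by
      simpa using sub_dvd_pow_sub_pow (X ^ m : F[X]) 1 (t / m)
    have hfac : monomial t α - monomial (t % m) α =
        C α * X ^ (t % m) * ((X ^ m) ^ (t / m) - 1) := by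
      rw [← C_mul_X_pow_eq_monomial, ← C_mul_X_pow_eq_monomial, ← pow_mul, ← Nat.mod_add_div t m,
        Nat.add_mul_div_left _ _ (NeZero.pos m), Nat.add_mul_mod_self_left, Nat.mod_mod,
        Nat.div_eq_of_lt (Nat.mod_lt t (NeZero.pos m)), zero_add, pow_add]
      ring
    exact hfac ▸ hpow.mul_left _
  have hlt : (monomial (t % m) α).degree < (X ^ m - 1 : F[X]).degree := by
    rw [degree_X_pow_sub_one]
    exact (degree_monomial_le _ _).trans_lt (by exact_mod_cast Nat.mod_lt t (NeZero.pos m))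
  rw [cyclicCoeffs_eq_iff.mpr hred]
  funext i
  show (monomial (t % m) α % (X ^ m - 1)).coeff i.val = _
  rw [(mod_eq_self_iff X_pow_sub_one_ne_zero).mpr hlt, coeff_monomial, Pi.single_apply,
    ← ZMod.val_natCast]
  exact if_congr ((ZMod.val_injective m).eq_iff.trans eq_comm) rfl rfl

theorem cyclicCoeffs_X_pow_mul (k : ℕ) (p : F[X]) (i : ZMod m) :
    cyclicCoeffs F m (X ^ k * p) i = cyclicCoeffs F m p (i - k) := by
  induction p using Polynomial.induction_on' with
  | add p q hp hq => simp only [mul_add, map_add, Pi.add_apply, hp, hq]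
  | monomial t α =>
    simp only [X_pow_mul_monomial, cyclicCoeffs_monomial, Pi.single_apply, Nat.cast_add,
      sub_eq_iff_eq_add]

theorem dvd_of_forall_cyclicCoeffs_mul_eq_zero {p : F[X]}
    (h : ∀ r, cyclicCoeffs F m (r * p) 0 = 0) : (X ^ m - 1) ∣ p := by
  rw [← cyclicCoeffs_eq_zero_iff]
  funext i
  simpa [cyclicCoeffs_X_pow_mul] using h (X ^ (-i).val)

theorem cyclicCoeffs_comp_X_pow_congr {e e' : ℕ} (h : (e : ZMod m) = e') (r : F[X]) :
    cyclicCoeffs F m (r.comp (X ^ e)) = cyclicCoeffs F m (r.comp (X ^ e')) := by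
  induction r using Polynomial.induction_on' with
  | add p q hp hq => simp only [add_comp, map_add, hp, hq]
  | monomial t α =>
    simp only [monomial_comp, ← pow_mul, C_mul_X_pow_eq_monomial, cyclicCoeffs_monomial,
      Nat.cast_mul, h]

theorem cyclicCoeffs_comp_X_pow_comp_X_pow {e e' : ℕ} (h : (e' : ZMod m) * e = 1) (r : F[X]) :
    cyclicCoeffs F m ((r.comp (X ^ e')).comp (X ^ e)) = cyclicCoeffs F m r := by
  rw [comp_assoc, X_pow_comp, ← pow_mul,
    cyclicCoeffs_comp_X_pow_congr (e' := 1) (by push_cast; rw [mul_comm, h]), pow_one, comp_X]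

theorem sum_cyclicCoeffs_mul_cyclicCoeffs {u : ZMod m} {e : ℕ} (h : u * e = -1) (f g : F[X]) :
    ∑ i, cyclicCoeffs F m f i * cyclicCoeffs F m g (u * i) =
      cyclicCoeffs F m (f * g.comp (X ^ e)) 0 := by
  induction f using Polynomial.induction_on' with
  | add p q hp hq => simp only [map_add, Pi.add_apply, add_mul, Finset.sum_add_distrib, hp, hq]
  | monomial s α =>
    induction g using Polynomial.induction_on' with
    | add p q hp hq =>
      simp only [map_add, Pi.add_apply, mul_add, add_comp, Finset.sum_add_distrib, hp, hq]
    | monomial t β =>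
      have hprod : monomial s α * (monomial t β).comp (X ^ e) = monomial (s + e * t) (α * β) := by
        rw [monomial_comp, ← pow_mul, C_mul_X_pow_eq_monomial, monomial_mul_monomial]
      have hexp : u * s = t ↔ 0 = ((s + e * t : ℕ) : ZMod m) := by
        push_cast
        constructor
        · intro hst; linear_combination e * hst - s * h
        · intro hs; linear_combination (-u) * hs - t * h
      simp only [cyclicCoeffs_monomial, hprod, Pi.single_apply (s : ZMod m), ite_mul, zero_mul,
        Finset.sum_ite_eq', Finset.mem_univ, if_true]
      simp only [Pi.single_apply, mul_ite, mul_zero, if_congr hexp rfl rfl]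

variable (m) in
noncomputable def qcEncode (c : Fin l → F[X]) : F[X] →ₗ[F] Fin l → ZMod m → F :=
  LinearMap.pi fun j => cyclicCoeffs F m ∘ₗ LinearMap.mulRight F (c j)

theorem oneGenQC_eq_range (c : Fin l → F[X]) :
    oneGenQC m l c = LinearMap.range (qcEncode m c) := by
  have hgen : {v | ∃ p : F[X], v = fun j => polyToVec m ((p * c j) % (X ^ m - 1))} =
      (LinearMap.range (qcEncode m c) : Set (Fin l → ZMod m → F)) := by
    ext v
    exact exists_congr fun p => eq_comm
  rw [oneGenQC, hgen, Submodule.span_eq]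

theorem qcEncode_eq_zero_iff {c : Fin l → F[X]} {p : F[X]} :
    qcEncode m c p = 0 ↔ ∀ j, (X ^ m - 1) ∣ p * c j :=
  funext_iff.trans (forall_congr' fun _ => cyclicCoeffs_eq_zero_iff)

theorem sum_qcEncode_mul_muQC_qcEncode {a : ℤ} {e : ℕ} (h : (a : ZMod m)⁻¹ * e = -1)
    (c : Fin l → F[X]) (p q : F[X]) :
    ∑ j, ∑ i, qcEncode m c p j i * muQC l m a (qcEncode m c q) j i =
      cyclicCoeffs F m (p * q.comp (X ^ e) * twistedSelfInner m e c) 0 := by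
  have hj : ∀ j, ∑ i, qcEncode m c p j i * muQC l m a (qcEncode m c q) j i =
      cyclicCoeffs F m (p * c j * (q * c j).comp (X ^ e)) 0 :=
    fun j => sum_cyclicCoeffs_mul_cyclicCoeffs h _ _
  rw [Finset.sum_congr rfl fun j _ => hj j, ← Finset.sum_apply, ← map_sum]
  refine congrFun (cyclicCoeffs_eq_iff.mpr ?_) 0
  rw [twistedSelfInner, Finset.mul_sum, ← Finset.sum_sub_distrib]
  refine Finset.dvd_sum fun j _ => ?_
  have hfac : p * c j * (q * c j).comp (X ^ e) -
      p * q.comp (X ^ e) * (c j * ((c j).comp (X ^ e) % (X ^ m - 1))) =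
      p * q.comp (X ^ e) * c j * ((c j).comp (X ^ e) - (c j).comp (X ^ e) % (X ^ m - 1)) := by
    rw [mul_comp]
    ring
  rw [hfac]
  exact (EuclideanDomain.dvd_sub_mod _ _).mul_left _

theorem qcEncode_mem_qcDual_iff {a : ℤ} {e : ℕ} (h : (a : ZMod m)⁻¹ * e = -1)
    (c : Fin l → F[X]) (p : F[X]) :
    qcEncode m c p ∈ qcDual ((oneGenQC m l c).map (muQC l m a)) ↔
      (X ^ m - 1) ∣ p * twistedSelfInner m e c := by
  have hmem : qcEncode m c p ∈ qcDual ((oneGenQC m l c).map (muQC l m a)) ↔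
      ∀ q : F[X], cyclicCoeffs F m (p * q.comp (X ^ e) * twistedSelfInner m e c) 0 = 0 := by
    change (∀ w ∈ (oneGenQC m l c).map (muQC l m a), _) ↔ _
    simp only [oneGenQC_eq_range, Submodule.mem_map, LinearMap.mem_range, forall_exists_index,
      and_imp, forall_apply_eq_imp_iff, sum_qcEncode_mul_muQC_qcEncode h]
  rw [hmem]
  set T := twistedSelfInner m e c
  constructor
  · intro horth
    refine dvd_of_forall_cyclicCoeffs_mul_eq_zero fun r => ?_
    -- `r ↦ r(x^e)` is invertible modulo `x^m - 1`, with inverse `r ↦ r(x^b)`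
    set b := (-(a : ZMod m)⁻¹).val
    have hb : (b : ZMod m) * e = 1 := by rw [ZMod.natCast_zmod_val, neg_mul, h, neg_neg]
    have hr := cyclicCoeffs_eq_iff.mp (cyclicCoeffs_comp_X_pow_comp_X_pow hb r)
    have hdvd : (X ^ m - 1) ∣ p * (r.comp (X ^ b)).comp (X ^ e) * T - r * (p * T) := by
      rw [show p * (r.comp (X ^ b)).comp (X ^ e) * T - r * (p * T) =
        p * T * ((r.comp (X ^ b)).comp (X ^ e) - r) by ring]
      exact hr.mul_left _
    rw [← horth (r.comp (X ^ b)), cyclicCoeffs_eq_iff.mpr hdvd]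
  · intro hdvd q
    have hdvd' : (X ^ m - 1) ∣ p * q.comp (X ^ e) * T := by
      rw [mul_right_comm]
      exact hdvd.mul_right _
    rw [cyclicCoeffs_eq_zero_iff.mpr hdvd', Pi.zero_apply]

theorem oneGenQC_le_qcDual_iff {a : ℤ} {e : ℕ} (h : (a : ZMod m)⁻¹ * e = -1)
    (c : Fin l → F[X]) :
    oneGenQC m l c ≤ qcDual ((oneGenQC m l c).map (muQC l m a)) ↔
      (X ^ m - 1) ∣ twistedSelfInner m e c := by
  constructor
  · intro hle
    simpa using (qcEncode_mem_qcDual_iff h c 1).mp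
      (hle ((oneGenQC_eq_range c).ge (LinearMap.mem_range_self _ 1)))
  · intro hdvd v hv
    obtain ⟨p, rfl⟩ := LinearMap.mem_range.mp ((oneGenQC_eq_range c).le hv)
    exact (qcEncode_mem_qcDual_iff h c p).mpr (hdvd.mul_left p)

theorem oneGenQC_inf_qcDual_eq_bot_iff {a : ℤ} {e : ℕ} (h : (a : ZMod m)⁻¹ * e = -1)
    (c : Fin l → F[X]) :
    oneGenQC m l c ⊓ qcDual ((oneGenQC m l c).map (muQC l m a)) = ⊥ ↔
      ∀ p, (X ^ m - 1) ∣ p * twistedSelfInner m e c → ∀ j, (X ^ m - 1) ∣ p * c j := by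
  rw [Submodule.eq_bot_iff]
  constructor
  · intro hbot p hp
    exact qcEncode_eq_zero_iff.mp (hbot _ ⟨(oneGenQC_eq_range c).ge (LinearMap.mem_range_self _ p),
      (qcEncode_mem_qcDual_iff h c p).mpr hp⟩)
  · rintro hdvd v ⟨hv, hvdual⟩
    obtain ⟨p, rfl⟩ := LinearMap.mem_range.mp ((oneGenQC_eq_range c).le hv)
    exact qcEncode_eq_zero_iff.mpr (hdvd p ((qcEncode_mem_qcDual_iff h c p).mp hvdual))

end QuasiCyclic

theorem oneGen_qc_mu_lcd_selfOrth_iff_gcd_general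
    {F : Type*} [Field F] [DecidableEq F] {l m : ℕ} [NeZero m]
    (a : ℤ) (ha : Int.gcd a m = 1)
    (a' : ℕ) (ha' : (a' : ℤ) = (-a) % (m : ℤ))
    (c : Fin l → Polynomial F) :
    (oneGenQC m l c ⊓ qcDual ((oneGenQC m l c).map (muQC l m a)) = ⊥ ↔
      gcd (∑ j, c j * ((c j).comp (X ^ a') % (X ^ m - 1))) (X ^ m - 1) =
        gcd (Finset.univ.gcd c) (X ^ m - 1)) ∧
    (oneGenQC m l c ≤ qcDual ((oneGenQC m l c).map (muQC l m a)) ↔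
      (X ^ m - 1) ∣ ∑ j, c j * ((c j).comp (X ^ a') % (X ^ m - 1))) := by
  have h : (a : ZMod m)⁻¹ * a' = -1 := by
    rw [← Int.cast_natCast, ha', ZMod.intCast_mod, Int.cast_neg, mul_neg,
      ZMod.coe_int_inv_mul_eq_one (Int.isCoprime_iff_gcd_eq_one.mpr ha)]
  refine ⟨(oneGenQC_inf_qcDual_eq_bot_iff h c).trans ?_, oneGenQC_le_qcDual_iff h c⟩
  refine Iff.trans ?_ (forall_dvd_mul_imp_dvd_mul_iff_gcd_eq X_pow_sub_one_ne_zero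
    (finset_gcd_dvd_twistedSelfInner a' c))
  simp only [dvd_mul_finset_gcd_iff, Finset.mem_univ, forall_const, twistedSelfInner]

/-- Let `gcd(m,q) = 1`, `gcd(a,m) = 1`, `a'` the residue of `-a` mod `m`, and
`C = F_q[x]·c(x)` a 1-generator QC code of index `l`.  Then `C` is `μ_a`-LCD iff
`gcd(∑ j, c_j(x) c_j(x^{a'}), x^m - 1) = gcd(c_1(x), …, c_l(x), x^m - 1)` (monic gcds,
computing `c_j(x^{a'})` modulo `x^m - 1`), and `C` is `μ_a` self-orthogonal iff
`∑ j, c_j(x) c_j(x^{a'}) ≡ 0 (mod x^m - 1)`. -/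
theorem oneGen_qc_mu_lcd_selfOrth_iff_gcd
    {F : Type*} [Field F] [Fintype F] [DecidableEq F] {l m : ℕ} [NeZero m]
    (hmq : Nat.Coprime m (Fintype.card F))
    (a : ℤ) (ha : Int.gcd a m = 1)
    (a' : ℕ) (ha' : (a' : ℤ) = (-a) % (m : ℤ))
    (c : Fin l → Polynomial F) :
    (oneGenQC m l c ⊓ qcDual ((oneGenQC m l c).map (muQC l m a)) = ⊥ ↔
      gcd (∑ j, c j * ((c j).comp (X ^ a') % (X ^ m - 1))) (X ^ m - 1) =
        gcd (Finset.univ.gcd c) (X ^ m - 1)) ∧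
    (oneGenQC m l c ≤ qcDual ((oneGenQC m l c).map (muQC l m a)) ↔
      (X ^ m - 1) ∣ ∑ j, c j * ((c j).comp (X ^ a') % (X ^ m - 1))) :=
  oneGen_qc_mu_lcd_selfOrth_iff_gcd_general a ha a' ha' c
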